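/- arXiv:1202.5947 — 3 statements merged into one kernel-verified Lean document; each statement's English description precedes it below -/
import Mathlib

section
/- Let P ⊆ ℝ^n be a rational polyhedron and η : P → ℝ^m a Z-map. Then the image η(P) is a rational polyhedron in ℝ^m. -/
open scoped BigOperators

noncomputable section

/-- `x ∈ ℝ^n` is a rational point: all its coordinates are rational. -/
def IsRationalPoint {n : ℕ} (x : Fin n → ℝ) : Prop := ∀ i, ∃ q : ℚ, x i = (q : ℝ)

/-- `den x` : the least common denominator of the coordinates of a rational point `x`. -/
noncomputable def den {n : ℕ} (x : Fin n → ℝ) : ℕ :=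
  sInf {d : ℕ | 0 < d ∧ ∀ i, ∃ z : ℤ, (d : ℝ) * x i = (z : ℝ)}

/-- The homogeneous correspondent `ṽ = den(v)·(v,1) ∈ ℤ^{n+1}` of a rational point,
viewed as a real vector (its entries are integers when `v` is rational). -/
noncomputable def homCorr {n : ℕ} (x : Fin n → ℝ) : Fin (n + 1) → ℝ :=
  Fin.snoc (fun i => (den x : ℝ) * x i) (den x)

/-- The finite set `V` is the vertex set of a rational simplex. -/
def IsRationalSimplex {n : ℕ} (V : Finset (Fin n → ℝ)) : Prop :=
  (∀ v ∈ V, IsRationalPoint v) ∧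
    AffineIndependent ℝ (fun v : V => (v : Fin n → ℝ))

/-- The finite set `V` is the vertex set of a regular rational simplex: the homogeneous
correspondents of its vertices can be extended to a basis of the free abelian group `ℤ^{n+1}`. -/
def IsRegularSimplex {n : ℕ} (V : Finset (Fin n → ℝ)) : Prop :=
  IsRationalSimplex V ∧
    ∃ (b : Module.Basis (Fin (n + 1)) ℤ (Fin (n + 1) → ℤ)) (f : V → Fin (n + 1)),
      Function.Injective f ∧
        ∀ v : V, (fun i => ((b (f v) i : ℤ) : ℝ)) = homCorr (v : Fin n → ℝ)

/-- An indexed family of points is the vertex family of a regular rational simplex. -/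
def IsRegularFamily {n k : ℕ} (x : Fin k → (Fin n → ℝ)) : Prop :=
  (∀ i, IsRationalPoint (x i)) ∧ AffineIndependent ℝ x ∧
    ∃ (b : Module.Basis (Fin (n + 1)) ℤ (Fin (n + 1) → ℤ)) (f : Fin k → Fin (n + 1)),
      Function.Injective f ∧ ∀ i, (fun j => ((b (f i) j : ℤ) : ℝ)) = homCorr (x i)

/-- A (finite, geometric) simplicial complex, presented by the vertex sets of its simplexes. -/
def IsSimplicialComplex {n : ℕ} (K : Finset (Finset (Fin n → ℝ))) : Prop :=
  (∀ V ∈ K, V.Nonempty ∧ AffineIndependent ℝ (fun v : V => (v : Fin n → ℝ))) ∧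
  (∀ V ∈ K, ∀ W, W ⊆ V → W.Nonempty → W ∈ K) ∧
  (∀ V ∈ K, ∀ W ∈ K,
    convexHull ℝ (V : Set (Fin n → ℝ)) ∩ convexHull ℝ (W : Set (Fin n → ℝ)) =
      convexHull ℝ ((V : Set (Fin n → ℝ)) ∩ (W : Set (Fin n → ℝ))))

/-- The support of a simplicial complex: the union of its simplexes. -/
def complexSupport {n : ℕ} (K : Finset (Finset (Fin n → ℝ))) : Set (Fin n → ℝ) :=
  ⋃ V ∈ K, convexHull ℝ (V : Set (Fin n → ℝ))

/-- The set of vertices of a simplicial complex. -/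
def complexVerts {n : ℕ} (K : Finset (Finset (Fin n → ℝ))) : Set (Fin n → ℝ) :=
  ⋃ V ∈ K, (V : Set (Fin n → ℝ))

/-- `K` is a triangulation of `P`: a simplicial complex all of whose simplexes are rational,
with support `P`. -/
def IsTriangulation {n : ℕ} (K : Finset (Finset (Fin n → ℝ))) (P : Set (Fin n → ℝ)) : Prop :=
  IsSimplicialComplex K ∧ (∀ V ∈ K, IsRationalSimplex V) ∧ complexSupport K = P

/-- `K` is a regular triangulation of `P`: all its simplexes are regular. -/
def IsRegularTriangulation {n : ℕ} (K : Finset (Finset (Fin n → ℝ)))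
    (P : Set (Fin n → ℝ)) : Prop :=
  IsTriangulation K P ∧ ∀ V ∈ K, IsRegularSimplex V

/-- `K` is a subdivision of `Δ`: each simplex of `K` is contained in some simplex of `Δ`. -/
def IsSubdivision {n : ℕ} (K Δ : Finset (Finset (Fin n → ℝ))) : Prop :=
  ∀ V ∈ K, ∃ W ∈ Δ, convexHull ℝ (V : Set (Fin n → ℝ)) ⊆ convexHull ℝ (W : Set (Fin n → ℝ))

/-- `K` is a strongly regular triangulation of `P`: a regular triangulation all of whose
maximal simplexes have vertices whose denominators have greatest common divisor 1. -/
def IsStronglyRegularTriangulation {n : ℕ} (K : Finset (Finset (Fin n → ℝ)))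
    (P : Set (Fin n → ℝ)) : Prop :=
  IsRegularTriangulation K P ∧
    ∀ V ∈ K, (∀ W ∈ K, V ⊆ W → W = V) → Finset.gcd V den = 1

/-- `P ⊆ ℝ^n` is a rational polyhedron: a finite union of convex hulls of
finite sets of rational points. -/
def IsRationalPolyhedron {n : ℕ} (P : Set (Fin n → ℝ)) : Prop :=
  ∃ 𝒱 : Finset (Finset (Fin n → ℝ)),
    (∀ V ∈ 𝒱, ∀ v ∈ V, IsRationalPoint v) ∧
    P = ⋃ V ∈ 𝒱, convexHull ℝ (V : Set (Fin n → ℝ))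

/-- `η` is a Z-map on `P`: continuous on `P` and piecewise (affine with integer
coefficients), with finitely many pieces. -/
def IsZMap {n m : ℕ} (P : Set (Fin n → ℝ)) (η : (Fin n → ℝ) → (Fin m → ℝ)) : Prop :=
  ContinuousOn η P ∧
    ∃ L : List (Matrix (Fin m) (Fin n) ℤ × (Fin m → ℤ)),
      ∀ x ∈ P, ∃ l ∈ L, η x = fun i => (∑ j, (l.1 i j : ℝ) * x j) + (l.2 i : ℝ)

/-- A Z-map from `P` into `Q`. -/
def IsZMapTo {n m : ℕ} (P : Set (Fin n → ℝ)) (Q : Set (Fin m → ℝ))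
    (η : (Fin n → ℝ) → (Fin m → ℝ)) : Prop :=
  IsZMap P η ∧ Set.MapsTo η P Q

/-- `η` is a Z-homeomorphism of `P` onto `Q`: a bijective Z-map whose inverse is a Z-map. -/
def IsZHomeo {n m : ℕ} (P : Set (Fin n → ℝ)) (Q : Set (Fin m → ℝ))
    (η : (Fin n → ℝ) → (Fin m → ℝ)) : Prop :=
  IsZMapTo P Q η ∧ Set.BijOn η P Q ∧
    ∃ μ, IsZMapTo Q P μ ∧ Set.LeftInvOn μ η P ∧ Set.RightInvOn μ η Q

/-- `η` is a strict Z-map from `P` to `Q`: injective and a Z-homeomorphism onto its image. -/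
def IsStrictZMap {n m : ℕ} (P : Set (Fin n → ℝ)) (Q : Set (Fin m → ℝ))
    (η : (Fin n → ℝ) → (Fin m → ℝ)) : Prop :=
  IsZMapTo P Q η ∧ Set.InjOn η P ∧ IsZHomeo P (η '' P) η

/-- `η` coincides with a single affine map on the set `S`. -/
def AffineOnSet {n m : ℕ} (η : (Fin n → ℝ) → (Fin m → ℝ)) (S : Set (Fin n → ℝ)) : Prop :=
  ∃ (M : Matrix (Fin m) (Fin n) ℝ) (b : Fin m → ℝ),
    ∀ x ∈ S, η x = fun i => (∑ j, M i j * x j) + b i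

end

/-!
Cut each simplex `conv V` of `P` along the finitely many rational hyperplanes on which two integer
affine pieces of `η` agree in some coordinate. Each cell is again the convex hull of finitely many
rational points, and on it any two pieces are coordinatewise comparable. The points of a cell at
which all the non-trivial comparisons are strict form a convex, hence connected, dense subset, on
which two pieces coincide either everywhere or nowhere. By continuity `η` therefore agrees with a
single piece on the whole cell, and the image of the cell is the convex hull of the rational images
of its vertices.
-/

open Set

section Slicing

variable {E : Type*} [AddCommGroup E] [Module ℝ E]

noncomputable def cutPoint (ψ : E →ᵃ[ℝ] ℝ) (v w : E) : E :=
  AffineMap.lineMap v w (ψ v / (ψ v - ψ w))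

theorem apply_cutPoint {ψ : E →ᵃ[ℝ] ℝ} {v w : E} (h : ψ v ≠ ψ w) : ψ (cutPoint ψ v w) = 0 := by
  rw [cutPoint, AffineMap.apply_lineMap, AffineMap.lineMap_apply_ring']
  field_simp [sub_ne_zero.mpr h]
  ring

theorem smul_cutPoint {ψ : E →ᵃ[ℝ] ℝ} {v w : E} (h : ψ v ≠ ψ w) :
    (ψ w - ψ v) • cutPoint ψ v w = ψ w • v - ψ v • w := by
  rw [cutPoint, AffineMap.lineMap_apply_module]
  have hd : ψ v - ψ w ≠ 0 := sub_ne_zero.mpr h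
  have h₁ : (ψ w - ψ v) * (1 - ψ v / (ψ v - ψ w)) = ψ w := by field_simp; ring
  have h₂ : (ψ w - ψ v) * (ψ v / (ψ v - ψ w)) = -ψ v := by field_simp; ring
  rw [smul_add, smul_smul, smul_smul, h₁, h₂, neg_smul, sub_eq_add_neg]

theorem cutPoint_mem_segment {ψ : E →ᵃ[ℝ] ℝ} {v w : E} (hv : ψ v ≤ 0) (hw : 0 < ψ w) :
    cutPoint ψ v w ∈ segment ℝ v w := by
  rw [segment_eq_image_lineMap]
  refine ⟨_, ⟨div_nonneg_of_nonpos hv (by linarith), ?_⟩, rfl⟩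
  rw [div_le_one_of_neg (by linarith)]
  linarith

theorem AffineMap.apply_sum_smul_of_sum_eq_one {F ι : Type*} [AddCommGroup F] [Module ℝ F]
    (f : E →ᵃ[ℝ] F) {s : Finset ι} {w : ι → ℝ} (p : ι → E) (hw : ∑ i ∈ s, w i = 1) :
    f (∑ i ∈ s, w i • p i) = ∑ i ∈ s, w i • f (p i) := by
  rw [← s.affineCombination_eq_linear_combination p w hw, s.map_affineCombination p w hw,
    s.affineCombination_eq_linear_combination _ w hw]
  rfl

/- With `S = ∑_N lam v * (-ψ v)` and `T = ∑_P lam w * ψ w`, the point is the centre of mass of the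
vertices `v ∈ N` with weights `(S - T) * lam v` and of the cut points of the pairs `(v, w) ∈ N × P`
with weights `lam v * lam w * (ψ w - ψ v)`; the total weight is `S`. -/
theorem sum_smul_mem_convexHull_union_image_cutPoint {ψ : E →ᵃ[ℝ] ℝ} {N P : Finset E}
    (hN : ∀ v ∈ N, ψ v ≤ 0) (hP : ∀ w ∈ P, 0 < ψ w) {lam : E → ℝ}
    (hlamN : ∀ v ∈ N, 0 ≤ lam v) (hlamP : ∀ w ∈ P, 0 ≤ lam w)
    (hlam : ∑ v ∈ N, lam v + ∑ w ∈ P, lam w = 1) (hS : 0 < ∑ v ∈ N, lam v * -ψ v)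
    (hTS : ∑ w ∈ P, lam w * ψ w ≤ ∑ v ∈ N, lam v * -ψ v) :
    ∑ v ∈ N, lam v • v + ∑ w ∈ P, lam w • w ∈
      convexHull ℝ (↑N ∪ (fun p : E × E => cutPoint ψ p.1 p.2) '' (↑N ×ˢ ↑P)) := by
  set S := ∑ v ∈ N, lam v * -ψ v
  set T := ∑ w ∈ P, lam w * ψ w
  set z : E × Option E → E := fun p => p.2.elim p.1 (cutPoint ψ p.1)
  set ω : E × Option E → ℝ := fun p => p.2.elim ((S - T) * lam p.1)
    fun w => lam p.1 * lam w * (ψ w - ψ p.1)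
  have hω : ∑ p ∈ N ×ˢ P.insertNone, ω p = S := by
    have hcross : ∑ v ∈ N, ∑ w ∈ P, lam v * lam w * (ψ w - ψ v) =
        (∑ v ∈ N, lam v) * T + S * ∑ w ∈ P, lam w := by
      simp only [T, S, Finset.sum_mul_sum, ← Finset.sum_add_distrib]
      exact Finset.sum_congr rfl fun v _ => Finset.sum_congr rfl fun w _ => by ring
    simp only [Finset.sum_product, Finset.sum_insertNone, ω, Option.elim, Finset.sum_add_distrib,
      hcross, ← Finset.mul_sum]
    linear_combination S * hlam
  have hωz : ∑ p ∈ N ×ˢ P.insertNone, ω p • z p =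
      S • (∑ v ∈ N, lam v • v + ∑ w ∈ P, lam w • w) := by
    have hcross : ∑ v ∈ N, ∑ w ∈ P, (lam v * lam w * (ψ w - ψ v)) • cutPoint ψ v w =
        T • ∑ v ∈ N, lam v • v + S • ∑ w ∈ P, lam w • w := by
      rw [Finset.sum_smul_sum, Finset.sum_smul_sum, Finset.sum_comm (s := P),
        ← Finset.sum_add_distrib]
      refine Finset.sum_congr rfl fun v hv => ?_
      rw [← Finset.sum_add_distrib]
      refine Finset.sum_congr rfl fun w hw => ?_
      rw [mul_smul, smul_cutPoint ((hN v hv).trans_lt (hP w hw)).ne]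
      module
    simp only [Finset.sum_product, Finset.sum_insertNone, ω, z, Option.elim]
    rw [Finset.sum_add_distrib, hcross]
    simp only [mul_smul, ← Finset.smul_sum]
    module
  have hcm : (N ×ˢ P.insertNone).centerMass ω z = ∑ v ∈ N, lam v • v + ∑ w ∈ P, lam w • w := by
    rw [Finset.centerMass, hω, hωz, smul_smul, inv_mul_cancel₀ hS.ne', one_smul]
  rw [← hcm]
  refine Finset.centerMass_mem_convexHull _ ?_ (hω ▸ hS) ?_
  · rintro ⟨v, _ | w⟩ hp <;> simp only [Finset.mem_product, Finset.mem_insertNone] at hp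
    · exact mul_nonneg (by linarith) (hlamN v hp.1)
    · have hw := hp.2 w rfl
      exact mul_nonneg (mul_nonneg (hlamN v hp.1) (hlamP w hw)) (by linarith [hN v hp.1, hP w hw])
  · rintro ⟨v, _ | w⟩ hp <;> simp only [Finset.mem_product, Finset.mem_insertNone] at hp
    · exact Or.inl hp.1
    · exact Or.inr ⟨(v, w), ⟨hp.1, hp.2 w rfl⟩, rfl⟩

theorem mem_convexHull_union_image_cutPoint {ψ : E →ᵃ[ℝ] ℝ} {N P : Finset E}
    (hN : ∀ v ∈ N, ψ v ≤ 0) (hP : ∀ w ∈ P, 0 < ψ w) {x : E}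
    (hx : x ∈ convexHull ℝ (↑N ∪ ↑P : Set E)) (hψx : ψ x ≤ 0) :
    x ∈ convexHull ℝ (↑N ∪ (fun p : E × E => cutPoint ψ p.1 p.2) '' (↑N ×ˢ ↑P)) := by
  classical
  rw [← Finset.coe_union] at hx
  obtain ⟨lam, hlam0, hlam1, rfl⟩ := Finset.mem_convexHull'.mp hx
  have hdisj : Disjoint N P :=
    Finset.disjoint_left.mpr fun v hv hv' => (hN v hv).not_gt (hP v hv')
  have hlamN : ∀ v ∈ N, 0 ≤ lam v := fun v hv => hlam0 v (Finset.mem_union_left _ hv)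
  have hlamP : ∀ w ∈ P, 0 ≤ lam w := fun w hw => hlam0 w (Finset.mem_union_right _ hw)
  rw [AffineMap.apply_sum_smul_of_sum_eq_one _ _ hlam1, Finset.sum_union hdisj] at hψx
  rw [Finset.sum_union hdisj] at hlam1 ⊢
  have hTS : ∑ w ∈ P, lam w * ψ w ≤ ∑ v ∈ N, lam v * -ψ v := by
    simp only [smul_eq_mul, mul_neg, Finset.sum_neg_distrib] at hψx ⊢
    linarith
  have hT : 0 ≤ ∑ w ∈ P, lam w * ψ w :=
    Finset.sum_nonneg fun w hw => mul_nonneg (hlamP w hw) (hP w hw).le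
  rcases (hT.trans hTS).eq_or_lt with hS | hS
  · have hP0 : ∀ w ∈ P, lam w = 0 := fun w hw => by
      have hw0 := (Finset.sum_eq_zero_iff_of_nonneg fun w hw =>
        mul_nonneg (hlamP w hw) (hP w hw).le).mp (le_antisymm (hS ▸ hTS) hT) w hw
      exact (mul_eq_zero.mp hw0).resolve_right (hP w hw).ne'
    rw [Finset.sum_eq_zero (s := P) fun w hw => by rw [hP0 w hw, zero_smul], add_zero]
    rw [Finset.sum_eq_zero hP0, add_zero] at hlam1
    exact (convex_convexHull ℝ _).sum_mem hlamN hlam1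
      fun v hv => subset_convexHull ℝ _ (Or.inl hv)
  · exact sum_smul_mem_convexHull_union_image_cutPoint hN hP hlamN hlamP hlam1 hS hTS

theorem exists_convexHull_eq_convexHull_inter_setOf_le (R : E → Prop) (ψ : E →ᵃ[ℝ] ℝ)
    (hR : ∀ v w, R v → R w → R (cutPoint ψ v w)) (V : Finset E) (hV : ∀ v ∈ V, R v) :
    ∃ W : Finset E, (∀ w ∈ W, R w) ∧
      convexHull ℝ ↑W = convexHull ℝ ↑V ∩ {x | ψ x ≤ 0} := by
  classical
  set N := V.filter (ψ · ≤ 0)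
  set P := V.filter (0 < ψ ·)
  have hN : ∀ v ∈ N, v ∈ V ∧ ψ v ≤ 0 := fun v hv => Finset.mem_filter.mp hv
  have hP : ∀ w ∈ P, w ∈ V ∧ 0 < ψ w := fun w hw => Finset.mem_filter.mp hw
  refine ⟨N ∪ (N ×ˢ P).image fun p => cutPoint ψ p.1 p.2, ?_, ?_⟩
  · simp only [Finset.mem_union, Finset.mem_image, Finset.mem_product]
    rintro _ (hv | ⟨⟨v, w⟩, ⟨hv, hw⟩, rfl⟩)
    exacts [hV _ (hN _ hv).1, hR v w (hV v (hN v hv).1) (hV w (hP w hw).1)]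
  have hVNP : (↑V : Set E) = ↑N ∪ ↑P := by
    ext v
    simp only [Finset.coe_filter, mem_union, mem_ofPred_eq, Finset.mem_coe, N, P]
    constructor
    · intro hv; exact (le_or_gt (ψ v) 0).imp (⟨hv, ·⟩) (⟨hv, ·⟩)
    · rintro (h | h) <;> exact h.1
  rw [Finset.coe_union, Finset.coe_image, Finset.coe_product]
  refine Subset.antisymm (convexHull_min ?_ ((convex_convexHull ℝ _).inter
    ((convex_Iic 0).affine_preimage ψ))) fun x ⟨hx, hψx⟩ =>
      mem_convexHull_union_image_cutPoint (fun v hv => (hN v hv).2) (fun w hw => (hP w hw).2)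
        (hVNP ▸ hx) hψx
  rintro _ (hv | ⟨⟨v, w⟩, ⟨hv, hw⟩, rfl⟩)
  · exact ⟨subset_convexHull ℝ _ (hN _ hv).1, (hN _ hv).2⟩
  · have hψ := (hN v hv).2.trans_lt (hP w hw).2
    exact ⟨segment_subset_convexHull (hN v hv).1 (hP w hw).1
      (cutPoint_mem_segment (hN v hv).2 (hP w hw).2), (apply_cutPoint hψ.ne).le⟩

theorem exists_convexHull_eq_convexHull_inter_setOf_forall_le {ι : Type*} (R : E → Prop)
    (ψ : ι → E →ᵃ[ℝ] ℝ) (t : Finset ι) (hR : ∀ i ∈ t, ∀ v w, R v → R w → R (cutPoint (ψ i) v w))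
    (V : Finset E) (hV : ∀ v ∈ V, R v) :
    ∃ W : Finset E, (∀ w ∈ W, R w) ∧
      convexHull ℝ ↑W = convexHull ℝ ↑V ∩ {x | ∀ i ∈ t, ψ i x ≤ 0} := by
  classical
  induction t using Finset.induction_on with
  | empty => exact ⟨V, hV, by simp⟩
  | insert j t _ ih =>
    obtain ⟨W₁, hW₁, hW₁V⟩ := ih fun i hi => hR i (Finset.mem_insert_of_mem hi)
    obtain ⟨W, hW, hWW₁⟩ := exists_convexHull_eq_convexHull_inter_setOf_le R (ψ j)
      (hR j (Finset.mem_insert_self j t)) W₁ hW₁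
    refine ⟨W, hW, ?_⟩
    rw [hWW₁, hW₁V]
    ext x
    simp only [mem_inter_iff, mem_ofPred_eq, Finset.forall_mem_insert]
    tauto

theorem iUnion_setOf_forall_ite_le_zero {ι : Type*} (φ : ι → E →ᵃ[ℝ] ℝ) :
    ⋃ s : ι → Bool, {x | ∀ i, (if s i then φ i else -φ i) x ≤ 0} = univ := by
  refine eq_univ_of_forall fun x => mem_iUnion.mpr ⟨fun i => decide (φ i x ≤ 0), fun i => ?_⟩
  by_cases h : φ i x ≤ 0
  · simp [h]
  · simp [h, (not_le.mp h).le]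

end Slicing

section Selection

theorem IsPreconnected.eqOn_of_forall_eqOn_or_forall_ne {X Y ι : Type*} [TopologicalSpace X]
    [TopologicalSpace Y] [T2Space Y] {S : Set X} (hS : IsPreconnected S) {f g₀ : X → Y}
    {g : ι → X → Y} {s : Finset ι} (hf : ContinuousOn f S) (hg₀ : ContinuousOn g₀ S)
    (hg : ∀ i ∈ s, ContinuousOn (g i) S) (hfg : ∀ x ∈ S, ∃ i ∈ s, f x = g i x)
    (hsep : ∀ i ∈ s, EqOn (g i) g₀ S ∨ ∀ x ∈ S, g i x ≠ g₀ x) {x₀ : X} (hx₀ : x₀ ∈ S)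
    (h₀ : f x₀ = g₀ x₀) : EqOn f g₀ S := by
  classical
  have := isPreconnected_iff_preconnectedSpace.mp hS
  let A : Set S := {x | f x = g₀ x}
  have hA : IsClosed A := isClosed_eq hf.domRestrict hg₀.domRestrict
  have hAc : Aᶜ = ⋃ i ∈ s.filter (fun i => ¬ EqOn (g i) g₀ S), {x : S | f x = g i x} := by
    ext x
    simp only [A, mem_compl_iff, mem_ofPred_eq, mem_iUnion, Finset.mem_filter, exists_prop]
    constructor
    · intro hx
      obtain ⟨i, hi, hfi⟩ := hfg x x.2
      exact ⟨i, ⟨hi, fun hgi => hx (hfi.trans (hgi x.2))⟩, hfi⟩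
    · rintro ⟨i, ⟨hi, hne⟩, hfi⟩ hx
      exact ((hsep i hi).resolve_left hne) x x.2 (hfi.symm.trans hx)
  have hAo : IsOpen A := by
    rw [← isClosed_compl_iff, hAc]
    exact isClosed_biUnion_finset fun i hi =>
      isClosed_eq hf.domRestrict (hg i (Finset.mem_filter.mp hi).1).domRestrict
  have hAuniv := IsClopen.eq_univ ⟨hA, hAo⟩ ⟨⟨x₀, hx₀⟩, h₀⟩
  exact fun x hx => (hAuniv ▸ mem_univ (⟨x, hx⟩ : S) : (⟨x, hx⟩ : S) ∈ A)

variable {E : Type*} [AddCommGroup E] [Module ℝ E]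

theorem Convex.exists_forall_lt_zero {ι : Type*} {C : Set E} (hC : Convex ℝ C) (hne : C.Nonempty)
    {φ : ι → E →ᵃ[ℝ] ℝ} (t : Finset ι) (hle : ∀ i ∈ t, ∀ x ∈ C, φ i x ≤ 0)
    (hlt : ∀ i ∈ t, ∃ x ∈ C, φ i x < 0) : ∃ u ∈ C, ∀ i ∈ t, φ i u < 0 := by
  classical
  induction t using Finset.induction_on with
  | empty => obtain ⟨u, hu⟩ := hne; exact ⟨u, hu, by simp⟩
  | insert j t _ ih =>
    obtain ⟨u, huC, hu⟩ := ih (fun i hi => hle i (Finset.mem_insert_of_mem hi))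
      (fun i hi => hlt i (Finset.mem_insert_of_mem hi))
    obtain ⟨y, hyC, hy⟩ := hlt j (Finset.mem_insert_self j t)
    have hmid : ∀ i, φ i ((1 / 2 : ℝ) • u + (1 / 2 : ℝ) • y) = (φ i u + φ i y) / 2 := fun i => by
      rw [Convex.combo_affine_apply (by norm_num)]; simp only [smul_eq_mul]; ring
    refine ⟨_, hC huC hyC (by norm_num : (0 : ℝ) ≤ 1 / 2) (by norm_num : (0 : ℝ) ≤ 1 / 2)
      (by norm_num), fun i hi => ?_⟩
    rw [hmid]
    rcases Finset.mem_insert.mp hi with rfl | hi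
    · linarith [hle i (Finset.mem_insert_self i t) u huC]
    · linarith [hu i hi, hle i (Finset.mem_insert_of_mem hi) y hyC]

theorem Convex.subset_closure_setOf_forall_lt_zero [TopologicalSpace E] [ContinuousAdd E]
    [ContinuousSMul ℝ E] {ι : Type*} {C : Set E} (hC : Convex ℝ C) {φ : ι → E →ᵃ[ℝ] ℝ}
    {t : Finset ι} (hle : ∀ i ∈ t, ∀ x ∈ C, φ i x ≤ 0) {u : E} (hu : u ∈ C)
    (hlt : ∀ i ∈ t, φ i u < 0) : C ⊆ closure {y ∈ C | ∀ i ∈ t, φ i y < 0} := by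
  intro x hx
  refine closure_mono ?_ (segment_subset_closure_openSegment (right_mem_segment ℝ u x))
  rintro _ ⟨a, b, ha, hb, hab, rfl⟩
  refine ⟨hC.openSegment_subset hu hx ⟨a, b, ha, hb, hab, rfl⟩, fun i hi => ?_⟩
  rw [Convex.combo_affine_apply hab, smul_eq_mul, smul_eq_mul]
  nlinarith [hlt i hi, hle i hi x hx]

theorem separated_of_forall_le_or_le {ι : Type*} {C : Set E} {f g : E →ᵃ[ℝ] (ι → ℝ)}
    (h : ∀ i, (∀ x ∈ C, f x i ≤ g x i) ∨ ∀ x ∈ C, g x i ≤ f x i) :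
    EqOn f g C ∨ ∃ φ : E →ᵃ[ℝ] ℝ,
      (∀ x ∈ C, φ x ≤ 0) ∧ (∃ x ∈ C, φ x < 0) ∧ ∀ x, f x = g x → φ x = 0 := by
  refine or_iff_not_imp_left.mpr fun hfg => ?_
  obtain ⟨x, hx, hne⟩ := not_forall₂.mp hfg
  obtain ⟨i, hi⟩ := Function.ne_iff.mp hne
  rcases h i with hle | hge
  · refine ⟨(LinearMap.proj i).toAffineMap.comp (f - g), ?_, ⟨x, hx, ?_⟩, ?_⟩ <;> simp
    exacts [fun y hy => hle y hy, lt_of_le_of_ne (hle x hx) hi, fun y hy => by simp [hy]]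
  · refine ⟨(LinearMap.proj i).toAffineMap.comp (g - f), ?_, ⟨x, hx, ?_⟩, ?_⟩ <;> simp
    exacts [fun y hy => hge y hy, lt_of_le_of_ne (hge x hx) (Ne.symm hi), fun y hy => by simp [hy]]

end Selection

theorem Convex.exists_eqOn_of_separated {E F κ : Type*} [NormedAddCommGroup E] [NormedSpace ℝ E]
    [FiniteDimensional ℝ E] [NormedAddCommGroup F] [NormedSpace ℝ F] [Fintype κ]
    {C : Set E} (hC : Convex ℝ C) (hne : C.Nonempty) {η : E → F} (hη : ContinuousOn η C)
    {l : κ → E →ᵃ[ℝ] F} (hsel : ∀ x ∈ C, ∃ k, η x = l k x)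
    (hsep : ∀ k k', EqOn (l k) (l k') C ∨ ∃ φ : E →ᵃ[ℝ] ℝ,
      (∀ x ∈ C, φ x ≤ 0) ∧ (∃ x ∈ C, φ x < 0) ∧ ∀ x, l k x = l k' x → φ x = 0) :
    ∃ k, EqOn η (l k) C := by
  classical
  have hφ : ∀ p : κ × κ, ∃ φ : E →ᵃ[ℝ] ℝ, (∀ x ∈ C, φ x ≤ 0) ∧
      (¬ EqOn (l p.1) (l p.2) C → ∃ x ∈ C, φ x < 0) ∧ ∀ x, l p.1 x = l p.2 x → φ x = 0 := by
    intro p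
    rcases hsep p.1 p.2 with h | ⟨φ, hle, hlt, hzero⟩
    · exact ⟨0, by simp, fun h' => absurd h h', by simp⟩
    · exact ⟨φ, hle, fun _ => hlt, hzero⟩
  choose φ hle hlt hzero using hφ
  set t := Finset.univ.filter fun p : κ × κ => ¬ EqOn (l p.1) (l p.2) C
  obtain ⟨u, huC, hu⟩ := hC.exists_forall_lt_zero hne t (fun p _ => hle p)
    (fun p hp => hlt p (Finset.mem_filter.mp hp).2)
  set S := {y ∈ C | ∀ p ∈ t, φ p y < 0}
  have hS : Convex ℝ S := fun x hx y hy a b ha hb hab => ⟨hC hx.1 hy.1 ha hb hab, fun p hp => by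
    rw [Convex.combo_affine_apply hab]
    exact convex_Iio (0 : ℝ) (hx.2 p hp) (hy.2 p hp) ha hb hab⟩
  obtain ⟨k₀, hk₀⟩ := hsel u huC
  have hl := fun k => (AffineMap.continuous_of_finiteDimensional (l k)).continuousOn (s := C)
  have hηS : EqOn η (l k₀) S := by
    refine hS.isPreconnected.eqOn_of_forall_eqOn_or_forall_ne (s := Finset.univ)
      (hη.mono (sep_subset _ _)) ((hl k₀).mono (sep_subset _ _))
      (fun k _ => (hl k).mono (sep_subset _ _))
      (fun y hy => by simpa using hsel y hy.1) (fun k _ => ?_) ⟨huC, hu⟩ hk₀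
    by_cases h : EqOn (l k) (l k₀) C
    · exact Or.inl (h.mono (sep_subset _ _))
    · exact Or.inr fun y hy hy' =>
        (hy.2 (k, k₀) (Finset.mem_filter.mpr ⟨Finset.mem_univ _, h⟩)).ne (hzero _ y hy')
  exact ⟨k₀, hηS.of_subset_closure hη (hl k₀) (sep_subset _ _)
    (hC.subset_closure_setOf_forall_lt_zero (fun p _ => hle p) huC hu)⟩

section Rational

variable {n m : ℕ}

theorem IsRationalPoint.lineMap {v w : Fin n → ℝ} (hv : IsRationalPoint v)
    (hw : IsRationalPoint w) (c : ℚ) : IsRationalPoint (AffineMap.lineMap v w (c : ℝ)) := by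
  intro i
  obtain ⟨a, ha⟩ := hv i
  obtain ⟨b, hb⟩ := hw i
  exact ⟨(1 - c) * a + c * b, by simp [AffineMap.lineMap_apply_module, ha, hb]⟩

theorem IsRationalPoint.cutPoint {ψ : (Fin n → ℝ) →ᵃ[ℝ] ℝ}
    (hψ : ∀ x, IsRationalPoint x → ∃ q : ℚ, ψ x = q) {v w : Fin n → ℝ}
    (hv : IsRationalPoint v) (hw : IsRationalPoint w) : IsRationalPoint (cutPoint ψ v w) := by
  obtain ⟨a, ha⟩ := hψ v hv
  obtain ⟨b, hb⟩ := hψ w hw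
  rw [_root_.cutPoint, ha, hb, ← Rat.cast_sub, ← Rat.cast_div]
  exact hv.lineMap hw _

theorem isRationalPolyhedron_convexHull {U : Finset (Fin n → ℝ)}
    (hU : ∀ u ∈ U, IsRationalPoint u) : IsRationalPolyhedron (convexHull ℝ (U : Set (Fin n → ℝ))) :=
  ⟨{U}, by simpa using hU, by simp⟩

theorem IsRationalPolyhedron.empty : IsRationalPolyhedron (∅ : Set (Fin n → ℝ)) :=
  ⟨∅, by simp, by simp⟩

theorem IsRationalPolyhedron.union {S₁ S₂ : Set (Fin n → ℝ)} (h₁ : IsRationalPolyhedron S₁)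
    (h₂ : IsRationalPolyhedron S₂) : IsRationalPolyhedron (S₁ ∪ S₂) := by
  classical
  obtain ⟨𝒱₁, h𝒱₁, rfl⟩ := h₁
  obtain ⟨𝒱₂, h𝒱₂, rfl⟩ := h₂
  refine ⟨𝒱₁ ∪ 𝒱₂, fun V hV => ?_, (Finset.set_biUnion_union _ _ _).symm⟩
  rcases Finset.mem_union.mp hV with hV | hV
  exacts [h𝒱₁ V hV, h𝒱₂ V hV]

theorem IsRationalPolyhedron.biUnion {ι : Type*} {s : Finset ι} {S : ι → Set (Fin n → ℝ)}
    (h : ∀ i ∈ s, IsRationalPolyhedron (S i)) : IsRationalPolyhedron (⋃ i ∈ s, S i) := by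
  classical
  induction s using Finset.induction_on with
  | empty => simpa using IsRationalPolyhedron.empty
  | insert j s _ ih =>
    rw [Finset.set_biUnion_insert]
    exact (h j (Finset.mem_insert_self j s)).union (ih fun i hi => h i (Finset.mem_insert_of_mem hi))

theorem IsRationalPolyhedron.iUnion {ι : Type*} [Fintype ι] {S : ι → Set (Fin n → ℝ)}
    (h : ∀ i, IsRationalPolyhedron (S i)) : IsRationalPolyhedron (⋃ i, S i) := by
  simpa using IsRationalPolyhedron.biUnion (s := Finset.univ) fun i _ => h i

theorem isRationalPolyhedron_image_convexHull_of_le_or_le {κ : Type*} [Fintype κ]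
    {W : Finset (Fin n → ℝ)} (hW : ∀ w ∈ W, IsRationalPoint w) {η : (Fin n → ℝ) → (Fin m → ℝ)}
    (hη : ContinuousOn η (convexHull ℝ ↑W)) {l : κ → (Fin n → ℝ) →ᵃ[ℝ] (Fin m → ℝ)}
    (hl : ∀ k x, IsRationalPoint x → IsRationalPoint (l k x))
    (hsel : ∀ x ∈ convexHull ℝ ↑W, ∃ k, η x = l k x)
    (hcomp : ∀ k k' i, (∀ x ∈ convexHull ℝ ↑W, l k x i ≤ l k' x i) ∨
      ∀ x ∈ convexHull ℝ ↑W, l k' x i ≤ l k x i) :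
    IsRationalPolyhedron (η '' convexHull ℝ ↑W) := by
  classical
  rcases (convexHull ℝ (W : Set (Fin n → ℝ))).eq_empty_or_nonempty with hC | hC
  · rw [hC, image_empty]
    exact .empty
  obtain ⟨k, hk⟩ := (convex_convexHull ℝ _).exists_eqOn_of_separated hC hη hsel
    fun k k' => separated_of_forall_le_or_le (hcomp k k')
  rw [hk.image_eq, AffineMap.image_convexHull, ← Finset.coe_image]
  refine isRationalPolyhedron_convexHull fun u hu => ?_
  obtain ⟨w, hw, rfl⟩ := Finset.mem_image.mp hu
  exact hl k w (hW w hw)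

theorem isRationalPolyhedron_image_convexHull {κ : Type*} [Fintype κ] {V : Finset (Fin n → ℝ)}
    (hV : ∀ v ∈ V, IsRationalPoint v) {η : (Fin n → ℝ) → (Fin m → ℝ)}
    (hη : ContinuousOn η (convexHull ℝ ↑V)) {l : κ → (Fin n → ℝ) →ᵃ[ℝ] (Fin m → ℝ)}
    (hl : ∀ k x, IsRationalPoint x → IsRationalPoint (l k x))
    (hsel : ∀ x ∈ convexHull ℝ ↑V, ∃ k, η x = l k x) :
    IsRationalPolyhedron (η '' convexHull ℝ ↑V) := by
  classical
  set ι := κ × κ × Fin m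
  let φ : ι → (Fin n → ℝ) →ᵃ[ℝ] ℝ := fun p =>
    (LinearMap.proj p.2.2).toAffineMap.comp (l p.1 - l p.2.1)
  have hφ : ∀ p x, φ p x = l p.1 x p.2.2 - l p.2.1 x p.2.2 := fun p x => by simp [φ]
  let ψ : (ι → Bool) → ι → (Fin n → ℝ) →ᵃ[ℝ] ℝ := fun s p => if s p then φ p else -φ p
  have hψ : ∀ s x, IsRationalPoint x → ∀ p, ∃ q : ℚ, ψ s p x = q := fun s x hx p => by
    obtain ⟨a, ha⟩ := hl p.1 x hx p.2.2
    obtain ⟨b, hb⟩ := hl p.2.1 x hx p.2.2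
    exact ⟨if s p then a - b else b - a, by split_ifs <;> simp [ψ, *]⟩
  have hcover : convexHull ℝ ↑V =
      ⋃ s, convexHull ℝ ↑V ∩ {x | ∀ p ∈ Finset.univ, ψ s p x ≤ 0} := by
    simp only [← inter_iUnion, Finset.mem_univ, true_implies, ψ, iUnion_setOf_forall_ite_le_zero,
      inter_univ]
  rw [hcover, image_iUnion]
  refine IsRationalPolyhedron.iUnion fun s => ?_
  obtain ⟨W, hWr, hW⟩ := exists_convexHull_eq_convexHull_inter_setOf_forall_le IsRationalPoint
    (ψ s) Finset.univ (fun p _ v w hv hw => hv.cutPoint (fun x hx => hψ s x hx p) hw) V hV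
  have hWV : convexHull ℝ (W : Set (Fin n → ℝ)) ⊆ convexHull ℝ ↑V := hW ▸ inter_subset_left
  rw [← hW]
  refine isRationalPolyhedron_image_convexHull_of_le_or_le hWr (hη.mono hWV) hl
    (fun x hx => hsel x (hWV hx)) fun k k' i => ?_
  have hcell : ∀ x ∈ convexHull ℝ (W : Set (Fin n → ℝ)), ψ s (k, k', i) x ≤ 0 :=
    fun x hx => (hW ▸ hx).2 _ (Finset.mem_univ _)
  cases hs : s (k, k', i)
  · exact Or.inr fun x hx => by simpa [ψ, hs, hφ] using hcell x hx
  · exact Or.inl fun x hx => by simpa [ψ, hs, hφ] using hcell x hx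

end Rational

noncomputable def intAffineMap {n m : ℕ} (l : Matrix (Fin m) (Fin n) ℤ × (Fin m → ℤ)) :
    (Fin n → ℝ) →ᵃ[ℝ] (Fin m → ℝ) :=
  (Matrix.toLin' (l.1.map (Int.cast : ℤ → ℝ))).toAffineMap +
    AffineMap.const ℝ _ fun i => (l.2 i : ℝ)

theorem intAffineMap_apply {n m : ℕ} (l : Matrix (Fin m) (Fin n) ℤ × (Fin m → ℤ))
    (x : Fin n → ℝ) : intAffineMap l x = fun i => (∑ j, (l.1 i j : ℝ) * x j) + (l.2 i : ℝ) := by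
  ext i
  simp [intAffineMap, Matrix.mulVec, dotProduct]

theorem IsRationalPoint.intAffineMap {n m : ℕ} (l : Matrix (Fin m) (Fin n) ℤ × (Fin m → ℤ))
    {x : Fin n → ℝ} (hx : IsRationalPoint x) : IsRationalPoint (intAffineMap l x) := by
  choose q hq using hx
  exact fun i => ⟨(∑ j, (l.1 i j : ℚ) * q j) + (l.2 i : ℚ), by simp [intAffineMap_apply, hq]⟩

/-- Lemma (ImagesZmorph0): the image of a rational polyhedron under a Z-map is a rational
polyhedron. -/
theorem statement4 {n m : ℕ} {P : Set (Fin n → ℝ)} (hP : IsRationalPolyhedron P)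
    {η : (Fin n → ℝ) → (Fin m → ℝ)} (hη : IsZMap P η) :
    IsRationalPolyhedron (η '' P) := by
  obtain ⟨𝒱, h𝒱, rfl⟩ := hP
  obtain ⟨hcont, L, hL⟩ := hη
  rw [image_iUnion₂]
  refine IsRationalPolyhedron.biUnion fun V hV => ?_
  have hVP : convexHull ℝ ↑V ⊆ ⋃ V ∈ 𝒱, convexHull ℝ (V : Set (Fin n → ℝ)) :=
    fun x hx => mem_iUnion₂.mpr ⟨V, hV, hx⟩
  refine isRationalPolyhedron_image_convexHull (h𝒱 V hV) (hcont.mono hVP)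
    (l := fun k : Fin L.length => intAffineMap (L.get k))
    (fun k x hx => hx.intAffineMap _) fun x hx => ?_
  obtain ⟨l, hl, hηx⟩ := hL x (hVP hx)
  obtain ⟨k, rfl⟩ := List.mem_iff_get.mp hl
  exact ⟨k, by rw [hηx, intAffineMap_apply]⟩
end

section
/- Let S = conv(x_1,…,x_k) ⊆ ℝ^n be a regular (k−1)-simplex (so x_1,…,x_k are affinely independent rational points whose homogeneous correspondents extend to a basis of ℤ^{n+1}), and let y_1,…,y_k be rational points in ℝ^n. Then the following are equivalent: (i) for each i = 1,…,k, den(y_i) divides den(x_i); (ii) there exist an integer matrix M ∈ ℤ^{n×n} and an integer vector b ∈ ℤ^n such that M x_i + b = y_i for all i = 1,…,k. -/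
open scoped BigOperators

/-! If `M xᵢ + b = yᵢ`, then `den(xᵢ) yᵢ = M (den(xᵢ) xᵢ) + den(xᵢ) b` is integral, so
`den(yᵢ) ∣ den(xᵢ)`. Conversely, if `den(yᵢ) ∣ den(xᵢ)` then `den(xᵢ) yᵢ` is integral; since the
homogeneous correspondents `x̃ᵢ` are part of a basis of `ℤ^{n+1}`, some integer matrix `(M | b)`
of size `n × (n+1)` sends each `x̃ᵢ = den(xᵢ)(xᵢ, 1)` to `den(xᵢ) yᵢ`, and dividing by `den(xᵢ)`
gives `M xᵢ + b = yᵢ`. -/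

open scoped Matrix

def ClearsDenominators {n : ℕ} (d : ℕ) (x : Fin n → ℝ) : Prop :=
  ∀ i, ∃ z : ℤ, (d : ℝ) * x i = (z : ℝ)

namespace ClearsDenominators

variable {n : ℕ} {d e : ℕ} {x : Fin n → ℝ}

theorem of_dvd (hd : ClearsDenominators d x) (hde : d ∣ e) : ClearsDenominators e x := by
  obtain ⟨c, rfl⟩ := hde
  intro i
  obtain ⟨z, hz⟩ := hd i
  exact ⟨c * z, by push_cast; rw [← hz]; ring⟩

theorem intAffine {m : ℕ} (hd : ClearsDenominators d x) (M : Matrix (Fin m) (Fin n) ℤ)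
    (b : Fin m → ℤ) : ClearsDenominators d (fun j => (∑ l, (M j l : ℝ) * x l) + (b j : ℝ)) := by
  choose z hz using hd
  intro j
  refine ⟨(∑ l, M j l * z l) + d * b j, ?_⟩
  push_cast
  simp only [mul_add, Finset.mul_sum, ← hz]
  congr 1
  exact Finset.sum_congr rfl fun l _ => by ring

end ClearsDenominators

theorem clearsDenominators_ratCast_of_den_dvd {n : ℕ} {d : ℕ} (q : Fin n → ℚ)
    (hd : ∀ i, (q i).den ∣ d) : ClearsDenominators d (fun i => (q i : ℝ)) := by
  intro i
  obtain ⟨c, hc⟩ := hd i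
  refine ⟨c * (q i).num, ?_⟩
  have hnum := congrArg (Rat.cast : ℚ → ℝ) (Rat.mul_den_eq_num (q i))
  push_cast at hnum ⊢
  rw [hc, ← hnum]
  push_cast
  ring

theorem den_spec {n : ℕ} {x : Fin n → ℝ} (h : ∃ d, 0 < d ∧ ClearsDenominators d x) :
    0 < den x ∧ ClearsDenominators (den x) x :=
  Nat.sInf_mem h

theorem den_le {n d : ℕ} {x : Fin n → ℝ} (hd : 0 < d) (h : ClearsDenominators d x) :
    den x ≤ d :=
  Nat.sInf_le ⟨hd, h⟩

theorem IsRationalPoint.den_pos {n : ℕ} {x : Fin n → ℝ} (hx : IsRationalPoint x) :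
    0 < den x := by
  choose q hq using hx
  obtain rfl : x = fun i => (q i : ℝ) := funext hq
  exact (den_spec ⟨∏ i, (q i).den, Finset.prod_pos fun i _ => (q i).pos,
    clearsDenominators_ratCast_of_den_dvd q fun i =>
      Finset.dvd_prod_of_mem _ (Finset.mem_univ i)⟩).1

theorem clearsDenominators_den {n : ℕ} {x : Fin n → ℝ} (hx : 0 < den x) :
    ClearsDenominators (den x) x :=
  (den_spec (Nat.nonempty_of_pos_sInf hx)).2

/-- Division with remainder: `d % den x` also clears the denominators, so by minimality of
`den x` it vanishes. -/
theorem den_dvd_of_clearsDenominators {n d : ℕ} {x : Fin n → ℝ} (hd : 0 < d)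
    (h : ClearsDenominators d x) : den x ∣ d := by
  obtain ⟨hpos, hden⟩ := den_spec ⟨d, hd, h⟩
  have hrem : ClearsDenominators (d % den x) x := by
    have hdiv := Nat.mod_add_div d (den x)
    generalize d % den x = r, d / den x = q at hdiv
    subst hdiv
    intro i
    obtain ⟨z, hz⟩ := h i
    obtain ⟨z', hz'⟩ := hden i
    refine ⟨z - q * z', ?_⟩
    push_cast at hz ⊢
    linear_combination hz - (q : ℝ) * hz'
  refine Nat.dvd_of_mod_eq_zero (Nat.eq_zero_of_not_pos fun hr => ?_)
  exact absurd (den_le hr hrem) (not_le.2 (Nat.mod_lt d hpos))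

theorem Module.Basis.exists_matrix_mulVec_eq {R ι κ m : Type*} [CommRing R] [Fintype ι]
    [DecidableEq ι] (bb : Module.Basis ι R (ι → R)) {f : κ → ι} (hf : Function.Injective f)
    (w : κ → m → R) : ∃ A : Matrix m ι R, ∀ i, A *ᵥ bb (f i) = w i := by
  refine ⟨LinearMap.toMatrix' (bb.constr R (Function.extend f w 0)), fun i => ?_⟩
  rw [LinearMap.toMatrix'_mulVec, bb.constr_basis, hf.extend_apply]

theorem sum_mul_homCorr {n : ℕ} (c : Fin (n + 1) → ℝ) (x : Fin n → ℝ) :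
    ∑ l, c l * homCorr x l = den x * ((∑ l : Fin n, c l.castSucc * x l) + c (Fin.last n)) := by
  simp only [homCorr, Fin.sum_univ_castSucc, Fin.snoc_castSucc, Fin.snoc_last, mul_add,
    Finset.mul_sum]
  congr 1
  · exact Finset.sum_congr rfl fun l _ => by ring
  · ring

theorem statement6_general {n k : ℕ} (x : Fin k → (Fin n → ℝ)) (hx : IsRegularFamily x)
    (y : Fin k → (Fin n → ℝ)) :
    (∀ i, den (y i) ∣ den (x i)) ↔
      ∃ (M : Matrix (Fin n) (Fin n) ℤ) (b : Fin n → ℤ),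
        ∀ i, (fun j => (∑ l, (M j l : ℝ) * x i l) + (b j : ℝ)) = y i := by
  obtain ⟨hxrat, -, bb, f, hf, hbf⟩ := hx
  have hden i : 0 < den (x i) := (hxrat i).den_pos
  constructor
  · intro hdvd
    have hy i : ClearsDenominators (den (x i)) (y i) :=
      (clearsDenominators_den (Nat.pos_of_dvd_of_pos (hdvd i) (hden i))).of_dvd (hdvd i)
    choose w hw using hy
    obtain ⟨A, hA⟩ := bb.exists_matrix_mulVec_eq hf w
    refine ⟨fun j l => A j l.castSucc, fun j => A j (Fin.last n), fun i => funext fun j => ?_⟩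
    have hAj : ∑ l, (A j l : ℝ) * homCorr (x i) l = den (x i) * y i j := by
      rw [hw, ← hA, ← hbf]
      simp [Matrix.mulVec, dotProduct]
    rw [sum_mul_homCorr] at hAj
    exact mul_left_cancel₀ (Nat.cast_ne_zero.2 (hden i).ne') hAj
  · rintro ⟨M, b, hMb⟩ i
    rw [← hMb i]
    exact den_dvd_of_clearsDenominators (hden i)
      ((clearsDenominators_den (hden i)).intAffine M b)

/-- Lemma (LinearMap): for the vertices `x_1, …, x_k` of a regular `(k-1)`-simplex and rational
points `y_1, …, y_k`, the denominators `den(y_i)` divide `den(x_i)` for all `i` iff there are an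
integer matrix `M` and an integer vector `b` with `M xᵢ + b = yᵢ` for all `i`. -/
theorem statement6 {n k : ℕ} (x : Fin k → (Fin n → ℝ)) (hx : IsRegularFamily x)
    (y : Fin k → (Fin n → ℝ)) (hy : ∀ i, IsRationalPoint (y i)) :
    (∀ i, den (y i) ∣ den (x i)) ↔
      ∃ (M : Matrix (Fin n) (Fin n) ℤ) (b : Fin n → ℤ),
        ∀ i, (fun j => (∑ l, (M j l : ℝ) * x i l) + (b j : ℝ)) = y i :=
  statement6_general x hx y
end

section
/- Let S ⊆ ℝ^n be a regular k-simplex and T ⊆ S a regular k-simplex contained in S (same dimension k). Then the greatest common divisor of the denominators of the vertices of T equals the greatest common divisor of the denominators of the vertices of S. -/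
open scoped BigOperators

/-! Write a rational point `x` of the affine span of a regular simplex as an affine combination
`∑ wᵥ v` of its vertices. Then `x̃ = ∑ (den x · wᵥ / den v) ṽ`, and since `x̃` is an integer
vector while the `ṽ` are part of a basis of `ℤ^{n+1}`, these coefficients are integers. The last
coordinate then exhibits `den x` as an integer combination of the `den v`, so the gcd of the
`den v` divides `den x`. Two `k`-simplices `T ⊆ S` have the same affine span, so each gcd divides
the other. -/

namespace IsRationalPoint

variable {n : ℕ} {x : Fin n → ℝ}

theorem den_spec (hx : IsRationalPoint x) :
    0 < den x ∧ ∀ i, ∃ z : ℤ, (den x : ℝ) * x i = z := by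
  choose q hq using hx
  refine Nat.sInf_mem (s := {d : ℕ | 0 < d ∧ ∀ i, ∃ z : ℤ, (d : ℝ) * x i = z})
    ⟨∏ i, (q i).den, Finset.prod_pos fun i _ => (q i).pos, fun i => ?_⟩
  obtain ⟨e, he⟩ : (q i).den ∣ ∏ j, (q j).den := Finset.dvd_prod_of_mem _ (Finset.mem_univ i)
  refine ⟨e * (q i).num, ?_⟩
  have : (((q i).den * e : ℕ) : ℚ) * q i = ((e * (q i).num : ℤ) : ℚ) := by
    push_cast
    rw [← Rat.den_mul_eq_num]
    ring
  rw [hq i, he]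
  exact_mod_cast congrArg (fun r : ℚ => (r : ℝ)) this

theorem den_pos_s15 (hx : IsRationalPoint x) : 0 < den x := hx.den_spec.1

theorem exists_intCast_eq_homCorr (hx : IsRationalPoint x) :
    ∃ W : Fin (n + 1) → ℤ, (fun j => (W j : ℝ)) = homCorr x := by
  choose z hz using hx.den_spec.2
  refine ⟨Fin.snoc z (den x : ℤ), funext fun j => ?_⟩
  cases j using Fin.lastCases with
  | last => simp [homCorr]
  | cast i => simp [homCorr, hz i]

end IsRationalPoint

theorem homCorr_sum_smul_of_sum_eq_one {n : ℕ} {ι : Type*} [Fintype ι] (p : ι → Fin n → ℝ)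
    (hp : ∀ i, den (p i) ≠ 0) (w : ι → ℝ) (hw : ∑ i, w i = 1) :
    homCorr (∑ i, w i • p i) =
      ∑ i, ((den (∑ i, w i • p i) : ℝ) * w i / den (p i)) • homCorr (p i) := by
  have hp' : ∀ i, (den (p i) : ℝ) ≠ 0 := fun i => by exact_mod_cast hp i
  funext j
  cases j using Fin.lastCases with
  | last =>
    simp [homCorr, Finset.sum_apply, div_mul_cancel₀ _ (hp' _), ← Finset.mul_sum, hw]
  | cast i =>
    simp only [homCorr, Finset.sum_apply, Pi.smul_apply, smul_eq_mul, Finset.mul_sum,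
      Fin.snoc_castSucc]
    refine Finset.sum_congr rfl fun k _ => ?_
    field_simp [hp' k]

theorem Module.Basis.linearIndependent_intCast {ι : Type*} [Fintype ι]
    (b : Module.Basis ι ℤ (ι → ℤ)) :
    LinearIndependent ℝ fun j i => (b j i : ℝ) := by
  classical
  have : Invertible ((Pi.basisFun ℤ ι).toMatrix b) := (Pi.basisFun ℤ ι).invertibleToMatrix b
  have hu : IsUnit ((Matrix.transpose ((Pi.basisFun ℤ ι).toMatrix b)).map (Int.cast : ℤ → ℝ)) :=
    ((Matrix.isUnit_transpose _).mpr (isUnit_of_invertible _)).map (Int.castRingHom ℝ).mapMatrix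
  exact Matrix.linearIndependent_rows_of_isUnit hu

theorem Module.Basis.repr_sum_smul_apply_of_injective {R M ι κ : Type*} [Semiring R]
    [AddCommMonoid M] [Module R M] [Fintype κ] (B : Module.Basis ι R M) {f : κ → ι}
    (hf : Function.Injective f) (c : κ → R) (k : κ) :
    B.repr (∑ j, c j • B (f j)) (f k) = c k := by
  classical
  simp [map_sum, Finsupp.single_apply, hf.eq_iff]

theorem Module.Basis.eq_repr_of_intCast_eq_sum {ι κ : Type*} [Fintype ι] [Fintype κ]
    (b : Module.Basis ι ℤ (ι → ℤ)) {f : κ → ι} (hf : Function.Injective f) (W : ι → ℤ)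
    (c : κ → ℝ) (h : (fun i => (W i : ℝ)) = ∑ j, c j • fun i => (b (f j) i : ℝ)) (k : κ) :
    c k = b.repr W (f k) := by
  have : Nonempty ι := ⟨f k⟩
  set B := basisOfLinearIndependentOfCardEqFinrank b.linearIndependent_intCast (by simp)
  have hB : ∀ j, B j = fun i => (b j i : ℝ) := by simp [B]
  have hW : (fun i => (W i : ℝ)) = ∑ j, (b.repr W j : ℝ) • B j := by
    conv_lhs => rw [← b.sum_repr W]
    ext i
    simp [hB]
  calc c k = B.repr (∑ j, c j • B (f j)) (f k) := (B.repr_sum_smul_apply_of_injective hf c k).symm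
    _ = B.repr (∑ j, (b.repr W j : ℝ) • B (id j)) (f k) := by simp only [hB, ← h, hW, id]
    _ = b.repr W (f k) := B.repr_sum_smul_apply_of_injective Function.injective_id _ _

theorem affineSpan_eq_of_le_of_card_eq {k V P : Type*} [DivisionRing k] [AddCommGroup V]
    [Module k V] [AddTorsor V P] {s t : Finset P} {m : ℕ} (hs : AffineIndependent k ((↑) : s → P))
    (ht : AffineIndependent k ((↑) : t → P)) (hsc : s.card = m + 1) (htc : t.card = m + 1)
    (hle : affineSpan k (s : Set P) ≤ affineSpan k (t : Set P)) :
    affineSpan k (s : Set P) = affineSpan k (t : Set P) := by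
  have range_eq (u : Finset P) : Set.range ((↑) : u → P) = u := by
    rw [Subtype.range_val_subtype, Finset.setOfPred_mem]
  rw [← range_eq s, ← range_eq t] at hle ⊢
  have hdim : Module.finrank k (affineSpan k (Set.range ((↑) : t → P))).direction = m := by
    rw [direction_affineSpan]
    exact ht.finrank_vectorSpan (by simpa using htc)
  exact hs.affineSpan_eq_of_le_of_card_eq_finrank_add_one hle (by simpa [hdim] using hsc)

theorem IsRegularSimplex.gcd_den_dvd_den {n : ℕ} {V : Finset (Fin n → ℝ)}
    (hV : IsRegularSimplex V) {x : Fin n → ℝ} (hx : IsRationalPoint x)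
    (hmem : x ∈ affineSpan ℝ (V : Set (Fin n → ℝ))) :
    V.gcd den ∣ den x := by
  obtain ⟨⟨hrat, -⟩, b, f, hf, hbf⟩ := hV
  rw [show (V : Set (Fin n → ℝ)) = Set.range fun v : V => (v : Fin n → ℝ) by simp] at hmem
  obtain ⟨w, hw, rfl⟩ := eq_affineCombination_of_mem_affineSpan_of_fintype hmem
  rw [Finset.univ.affineCombination_eq_linear_combination _ _ hw] at hx ⊢
  set x := ∑ v : V, w v • (v : Fin n → ℝ)
  set c : V → ℝ := fun v => (den x : ℝ) * w v / den (v : Fin n → ℝ)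
  have hcomb : homCorr x = ∑ v, c v • homCorr (v : Fin n → ℝ) :=
    homCorr_sum_smul_of_sum_eq_one _ (fun v : V => (hrat v v.2).den_pos_s15.ne') w hw
  obtain ⟨W, hW⟩ := hx.exists_intCast_eq_homCorr
  have hc_int := b.eq_repr_of_intCast_eq_sum hf W c (by simp_rw [hW, hcomb, hbf])
  have hlast : (den x : ℝ) = ∑ v, c v * den (v : Fin n → ℝ) := by
    simpa [homCorr] using congrFun hcomb (Fin.last n)
  have hint : (den x : ℤ) = ∑ v, b.repr W (f v) * (den (v : Fin n → ℝ) : ℤ) := by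
    simp only [hc_int] at hlast
    exact_mod_cast hlast
  exact Int.natCast_dvd_natCast.mp <| hint ▸ Finset.dvd_sum fun v _ =>
    dvd_mul_of_dvd_right (Int.natCast_dvd_natCast.mpr (Finset.gcd_dvd v.2)) _

/-- Lemma (subdiv preserves den): if `T ⊆ S` are regular `k`-simplexes of the same dimension,
then the gcd of the denominators of the vertices of `T` equals that of `S`. -/
theorem statement15 {n k : ℕ} (S T : Finset (Fin n → ℝ))
    (hS : IsRegularSimplex S) (hT : IsRegularSimplex T)
    (hScard : S.card = k + 1) (hTcard : T.card = k + 1)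
    (hsub : convexHull ℝ (T : Set (Fin n → ℝ)) ⊆ convexHull ℝ (S : Set (Fin n → ℝ))) :
    Finset.gcd T den = Finset.gcd S den := by
  have hle : affineSpan ℝ (T : Set (Fin n → ℝ)) ≤ affineSpan ℝ (S : Set (Fin n → ℝ)) := by
    simpa only [affineSpan_convexHull] using affineSpan_mono ℝ hsub
  have hspan := affineSpan_eq_of_le_of_card_eq hT.1.2 hS.1.2 hTcard hScard hle
  refine Nat.dvd_antisymm (Finset.dvd_gcd fun s hs => hT.gcd_den_dvd_den (hS.1.1 s hs) ?_)
    (Finset.dvd_gcd fun t ht => hS.gcd_den_dvd_den (hT.1.1 t ht) (hle (mem_affineSpan ℝ ht)))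
  exact hspan ▸ mem_affineSpan ℝ hs
end
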